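/- Let G = (A ∪ B, E) be a finite bipartite graph and suppose there exists a vector x = (x_e)_{e∈E} of reals with x_e ≥ 0 for all e ∈ E, 1 ≤ Σ_{e ∈ δ(a)} x_e ≤ 4 for all a ∈ A, and Σ_{e ∈ δ(b)} x_e = 1 for all b ∈ B (where δ(u) is the set of edges incident to u). Then there exists a map f : B → A such that (i) f(b) = a implies (a, b) ∈ E, (ii) every a ∈ A has at least one preimage under f, and (iii) every a ∈ A has at most four preimages under f. -/
import Mathlib


private lemma stmt10_aux1 {A B : Type*} [DecidableEq A] [DecidableEq B]
    (E : Finset (A × B)) (x : A × B → ℝ)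
    (hx0 : ∀ e ∈ E, 0 ≤ x e)
    (hA4 : ∀ a : A, ∑ e ∈ E.filter (fun e => e.1 = a), x e ≤ 4)
    (hB : ∀ b : B, ∑ e ∈ E.filter (fun e => e.2 = b), x e = 1)
    (S : Finset B) :
    S.card ≤ 4 * ((E.filter (fun e => e.2 ∈ S)).image Prod.fst).card := by
  set F := E.filter (fun e => e.2 ∈ S) with hF
  set N := F.image Prod.fst with hN
  have key : (S.card : ℝ) ≤ 4 * (N.card : ℝ) := by
    have h1 : (S.card : ℝ) = ∑ e ∈ F, x e := by
      rw [← Finset.sum_fiberwise_of_maps_to (g := Prod.snd) (t := S)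
        (fun e he => (Finset.mem_filter.mp he).2) x]
      rw [Finset.card_eq_sum_ones, Nat.cast_sum]
      refine Finset.sum_congr rfl fun b hb => ?_
      have : F.filter (fun e => e.2 = b) = E.filter (fun e => e.2 = b) := by
        rw [hF, Finset.filter_filter]
        refine Finset.filter_congr fun e he => ?_
        constructor
        · exact fun h => h.2
        · exact fun h => ⟨h ▸ hb, h⟩
      rw [this, hB b]
      simp
    have h2 : ∑ e ∈ F, x e = ∑ a ∈ N, ∑ e ∈ F.filter (fun e => e.1 = a), x e := by
      rw [Finset.sum_fiberwise_of_maps_to (g := Prod.fst) (t := N)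
        (fun e he => Finset.mem_image_of_mem Prod.fst he) x]
    have h3 : ∀ a ∈ N, ∑ e ∈ F.filter (fun e => e.1 = a), x e
        ≤ ∑ e ∈ E.filter (fun e => e.1 = a), x e := by
      intro a _
      refine Finset.sum_le_sum_of_subset_of_nonneg ?_ ?_
      · intro e he
        simp only [hF, Finset.mem_filter] at he ⊢
        exact ⟨he.1.1, he.2⟩
      · intro e he _
        exact hx0 e (Finset.mem_filter.mp he).1
    calc (S.card : ℝ) = ∑ e ∈ F, x e := h1
      _ = ∑ a ∈ N, ∑ e ∈ F.filter (fun e => e.1 = a), x e := h2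
      _ ≤ ∑ a ∈ N, ∑ e ∈ E.filter (fun e => e.1 = a), x e :=
          Finset.sum_le_sum h3
      _ ≤ ∑ _a ∈ N, (4:ℝ) := Finset.sum_le_sum (fun a _ => hA4 a)
      _ = 4 * N.card := by rw [Finset.sum_const]; ring
  exact_mod_cast key

private lemma stmt10_aux2 {A B : Type*} [DecidableEq A] [DecidableEq B]
    (E : Finset (A × B)) (x : A × B → ℝ)
    (hx0 : ∀ e ∈ E, 0 ≤ x e)
    (hA1 : ∀ a : A, 1 ≤ ∑ e ∈ E.filter (fun e => e.1 = a), x e)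
    (hB : ∀ b : B, ∑ e ∈ E.filter (fun e => e.2 = b), x e = 1)
    (S : Finset A) :
    S.card ≤ ((E.filter (fun e => e.1 ∈ S)).image Prod.snd).card := by
  set F := E.filter (fun e => e.1 ∈ S) with hF
  set N := F.image Prod.snd with hN
  have key : (S.card : ℝ) ≤ (N.card : ℝ) := by
    have h1 : (S.card : ℝ) ≤ ∑ e ∈ F, x e := by
      rw [← Finset.sum_fiberwise_of_maps_to (g := Prod.fst) (t := S)
        (fun e he => (Finset.mem_filter.mp he).2) x]
      rw [Finset.card_eq_sum_ones, Nat.cast_sum]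
      refine Finset.sum_le_sum fun a ha => ?_
      have heq : F.filter (fun e => e.1 = a) = E.filter (fun e => e.1 = a) := by
        rw [hF, Finset.filter_filter]
        refine Finset.filter_congr fun e he => ?_
        constructor
        · exact fun h => h.2
        · exact fun h => ⟨h ▸ ha, h⟩
      rw [heq]
      simpa using hA1 a
    have h2 : ∑ e ∈ F, x e = ∑ b ∈ N, ∑ e ∈ F.filter (fun e => e.2 = b), x e := by
      rw [Finset.sum_fiberwise_of_maps_to (g := Prod.snd) (t := N)
        (fun e he => Finset.mem_image_of_mem Prod.snd he) x]
    have h3 : ∀ b ∈ N, ∑ e ∈ F.filter (fun e => e.2 = b), x e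
        ≤ ∑ e ∈ E.filter (fun e => e.2 = b), x e := by
      intro b _
      refine Finset.sum_le_sum_of_subset_of_nonneg ?_ ?_
      · intro e he
        simp only [hF, Finset.mem_filter] at he ⊢
        exact ⟨he.1.1, he.2⟩
      · intro e he _
        exact hx0 e (Finset.mem_filter.mp he).1
    calc (S.card : ℝ) ≤ ∑ e ∈ F, x e := h1
      _ = ∑ b ∈ N, ∑ e ∈ F.filter (fun e => e.2 = b), x e := h2
      _ ≤ ∑ b ∈ N, ∑ e ∈ E.filter (fun e => e.2 = b), x e :=
          Finset.sum_le_sum h3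
      _ = ∑ _b ∈ N, (1:ℝ) := Finset.sum_congr rfl (fun b _ => hB b)
      _ = N.card := by rw [Finset.sum_const]; ring
  exact_mod_cast key


/-- Fractional matching lemma: if a finite bipartite graph `G = (A ∪ B, E)` admits
nonnegative edge weights `x` with `1 ≤ Σ_{e ∈ δ(a)} x_e ≤ 4` for every `a ∈ A` and
`Σ_{e ∈ δ(b)} x_e = 1` for every `b ∈ B`, then there is a map `f : B → A` such that
`f(b) = a` only along edges, every `a ∈ A` has at least one preimage, and every
`a ∈ A` has at most four preimages. -/
theorem stmt10 {A B : Type*} [Fintype A] [Fintype B] [DecidableEq A] [DecidableEq B]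
    (E : Finset (A × B)) (x : A × B → ℝ)
    (hx0 : ∀ e ∈ E, 0 ≤ x e)
    (hA1 : ∀ a : A, 1 ≤ ∑ e ∈ E.filter (fun e => e.1 = a), x e)
    (hA4 : ∀ a : A, ∑ e ∈ E.filter (fun e => e.1 = a), x e ≤ 4)
    (hB : ∀ b : B, ∑ e ∈ E.filter (fun e => e.2 = b), x e = 1) :
    ∃ f : B → A,
      (∀ b : B, (f b, b) ∈ E) ∧
      (∀ a : A, ∃ b : B, f b = a) ∧
      (∀ a : A, (Finset.univ.filter (fun b : B => f b = a)).card ≤ 4) := by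
  have aux1 := stmt10_aux1 E x hx0 hA4 hB
  have aux2 := stmt10_aux2 E x hx0 hA1 hB
  classical
  have hB4 : Fintype.card B ≤ 4 * Fintype.card A := by
    calc Fintype.card B = (Finset.univ : Finset B).card := rfl
      _ ≤ 4 * ((E.filter (fun e => e.2 ∈ (Finset.univ : Finset B))).image Prod.fst).card :=
          aux1 Finset.univ
      _ ≤ 4 * Fintype.card A := by
          have := Finset.card_le_univ ((E.filter (fun e => e.2 ∈ (Finset.univ : Finset B))).image Prod.fst)
          omega
  set k := 4 * Fintype.card A - Fintype.card B with hk
  set t : B ⊕ Fin k → Finset (A × Fin 4) := fun z => match z with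
    | Sum.inl b => ((E.filter (fun e => e.2 = b)).image Prod.fst) ×ˢ Finset.univ
    | Sum.inr _ => Finset.univ ×ˢ (Finset.univ.filter (fun i : Fin 4 => i ≠ 0)) with ht
  have hall : ∀ s : Finset (B ⊕ Fin k), s.card ≤ (s.biUnion t).card := by
    intro s
    set sB : Finset B := Finset.univ.filter (fun b => Sum.inl b ∈ s) with hsB
    set sD : Finset (Fin k) := Finset.univ.filter (fun d => Sum.inr d ∈ s) with hsD
    have hscard : s.card ≤ sB.card + sD.card := by
      have hsub : s ⊆ sB.map ⟨Sum.inl, Sum.inl_injective⟩ ∪ sD.map ⟨Sum.inr, Sum.inr_injective⟩ := by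
        intro z hz
        rcases z with b | d
        · exact Finset.mem_union_left _ (Finset.mem_map_of_mem _ (by simp [hsB, hz]))
        · exact Finset.mem_union_right _ (Finset.mem_map_of_mem _ (by simp [hsD, hz]))
      calc s.card ≤ _ := Finset.card_le_card hsub
        _ ≤ _ := Finset.card_union_le _ _
        _ = sB.card + sD.card := by rw [Finset.card_map, Finset.card_map]
    set N : Finset A := (E.filter (fun e => e.2 ∈ sB)).image Prod.fst with hN
    have hNsub : N ×ˢ (Finset.univ : Finset (Fin 4)) ⊆ s.biUnion t := by
      intro p hp
      rw [Finset.mem_product] at hp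
      obtain ⟨e, he, hep⟩ := Finset.mem_image.mp hp.1
      rw [Finset.mem_filter] at he
      have hbs : Sum.inl e.2 ∈ s := by
        have := he.2
        simp only [hsB, Finset.mem_filter, Finset.mem_univ, true_and] at this
        exact this
      refine Finset.mem_biUnion.mpr ⟨Sum.inl e.2, hbs, ?_⟩
      simp only [ht]
      rw [Finset.mem_product]
      exact ⟨Finset.mem_image.mpr ⟨e, Finset.mem_filter.mpr ⟨he.1, rfl⟩, hep⟩, Finset.mem_univ _⟩
    have h1 : sB.card ≤ 4 * N.card := aux1 sB
    rcases Finset.eq_empty_or_nonempty sD with hD | ⟨d, hd⟩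
    · have hsB' : s.card ≤ sB.card := by rw [hD] at hscard; simpa using hscard
      calc s.card ≤ sB.card := hsB'
        _ ≤ 4 * N.card := h1
        _ = (N ×ˢ (Finset.univ : Finset (Fin 4))).card := by
            rw [Finset.card_product]; simp [mul_comm]
        _ ≤ (s.biUnion t).card := Finset.card_le_card hNsub
    · -- dummy present
      have hds : Sum.inr d ∈ s := by
        simp only [hsD, Finset.mem_filter, Finset.mem_univ, true_and] at hd
        exact hd
      set D3 : Finset (Fin 4) := Finset.univ.filter (fun i : Fin 4 => i ≠ 0) with hD3
      have hsub2 : (Finset.univ : Finset A) ×ˢ D3 ⊆ s.biUnion t := by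
        intro p hp
        exact Finset.mem_biUnion.mpr ⟨Sum.inr d, hds, by simpa [ht] using hp⟩
      have hsub1 : N ×ˢ ({0} : Finset (Fin 4)) ⊆ s.biUnion t := by
        refine subset_trans ?_ hNsub
        exact Finset.product_subset_product_right (Finset.subset_univ _)
      have hdisj : Disjoint ((Finset.univ : Finset A) ×ˢ D3) (N ×ˢ ({0} : Finset (Fin 4))) := by
        rw [Finset.disjoint_left]
        intro p hp hp'
        rw [Finset.mem_product] at hp hp'
        have h0 : p.2 = 0 := Finset.mem_singleton.mp hp'.2
        have := hp.2
        simp [hD3, h0] at this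
      have hbig : 3 * Fintype.card A + N.card ≤ (s.biUnion t).card := by
        have hu : ((Finset.univ : Finset A) ×ˢ D3) ∪ (N ×ˢ ({0} : Finset (Fin 4))) ⊆ s.biUnion t :=
          Finset.union_subset hsub2 hsub1
        have hcu := Finset.card_le_card hu
        rw [Finset.card_union_of_disjoint hdisj, Finset.card_product, Finset.card_product] at hcu
        have hD3card : D3.card = 3 := by decide
        simp only [Finset.card_univ, hD3card, Finset.card_singleton, mul_one] at hcu
        omega
      -- lower bound on |B|
      have h2 := aux2 Nᶜ
      set N2 : Finset B := (E.filter (fun e => e.1 ∈ Nᶜ)).image Prod.snd with hN2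
      have hdisj2 : Disjoint N2 sB := by
        rw [Finset.disjoint_left]
        intro b hb hb'
        obtain ⟨e, he, hep⟩ := Finset.mem_image.mp hb
        rw [Finset.mem_filter] at he
        have : e.1 ∈ N := Finset.mem_image.mpr ⟨e, Finset.mem_filter.mpr ⟨he.1, hep ▸ hb'⟩, rfl⟩
        exact absurd this (Finset.mem_compl.mp he.2)
      have hNB : N2.card + sB.card ≤ Fintype.card B := by
        have := Finset.card_le_univ (N2 ∪ sB)
        rw [Finset.card_union_of_disjoint hdisj2] at this
        simpa using this
      have hNc : (Nᶜ : Finset A).card = Fintype.card A - N.card := Finset.card_compl N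
      have hNle : N.card ≤ Fintype.card A := Finset.card_le_univ N
      have hsD' : sD.card ≤ k := by
        have := Finset.card_le_univ sD
        simpa using this
      omega
  obtain ⟨M, hMinj, hMmem⟩ := (Finset.all_card_le_biUnion_card_iff_exists_injective t).mp hall
  have hMbij : Function.Bijective M := by
    rw [Fintype.bijective_iff_injective_and_card]
    refine ⟨hMinj, ?_⟩
    simp only [Fintype.card_sum, Fintype.card_prod, Fintype.card_fin]
    omega
  refine ⟨fun b => (M (Sum.inl b)).1, ?_, ?_, ?_⟩
  · intro b
    have := hMmem (Sum.inl b)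
    simp only [ht] at this
    rw [Finset.mem_product] at this
    obtain ⟨e, he, hep⟩ := Finset.mem_image.mp this.1
    rw [Finset.mem_filter] at he
    have : e = ((M (Sum.inl b)).1, b) := by
      ext
      · exact hep
      · exact he.2
    rw [this] at he
    exact he.1
  · intro a
    obtain ⟨z, hz⟩ := hMbij.surjective (a, 0)
    rcases z with b | d
    · exact ⟨b, by show (M (Sum.inl b)).1 = a; rw [hz]⟩
    · exfalso
      have := hMmem (Sum.inr d)
      simp only [ht] at this
      rw [Finset.mem_product, hz] at this
      simp at this
  · intro a
    have hinj : Set.InjOn (fun b => (M (Sum.inl b)).2)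
        ↑(Finset.univ.filter (fun b : B => (M (Sum.inl b)).1 = a)) := by
      intro b1 h1 b2 h2 heq
      simp only [Finset.coe_filter, Set.mem_setOf_eq] at h1 h2
      have : M (Sum.inl b1) = M (Sum.inl b2) :=
        Prod.ext (by rw [h1.2, h2.2]) heq
      exact Sum.inl_injective (hMinj this)
    calc (Finset.univ.filter (fun b : B => (M (Sum.inl b)).1 = a)).card
        ≤ (Finset.univ : Finset (Fin 4)).card :=
          Finset.card_le_card_of_injOn _ (fun _ _ => Finset.mem_univ _) hinj
      _ = 4 := by simp
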